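/- Every term τ of type cyl_n over m variables is equivalent, in all Boolean algebras with operators of type cyl_n, to a finite sum of normal forms of a single degree q; moreover q and the set S_τ ⊆ F^{n,m}_q with τ = Σ S_τ can be computed effectively from τ. -/

import Mathlib

/-- The set of atomic generators: diagonals `d i j` and the `m` free variables. -/
abbrev DAtom (n m : ℕ) : Type := Fin n × Fin n ⊕ Fin m

/-- The type of normal forms of degree `k` (for type `cyl_n` over `m` variables).
A normal form of degree `0` is a complete conjunction over `D = {d_ij} ∪ {x_0,…,x_{m-1}}`,
i.e. it is coded by a sign function `β : D → Bool`.  A normal form of degree `k+1` is a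
complete conjunction over `D` together with the cylindrifications `c i σ` of all normal
forms `σ` of degree `k`, coded by a pair of sign functions. -/
def NF (n m : ℕ) : ℕ → Type
  | 0 => DAtom n m → Bool
  | k + 1 => (DAtom n m → Bool) × (Fin n × NF n m k → Bool)

/-- Normal forms of each degree form a finite type with decidable equality. -/
def NF.inst (n m : ℕ) : ∀ k, Fintype (NF n m k) × DecidableEq (NF n m k)
  | 0 =>
    (inferInstanceAs (Fintype (DAtom n m → Bool)),
     inferInstanceAs (DecidableEq (DAtom n m → Bool)))
  | k + 1 =>
    letI := (NF.inst n m k).1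
    letI := (NF.inst n m k).2
    (inferInstanceAs (Fintype ((DAtom n m → Bool) × (Fin n × NF n m k → Bool))),
     inferInstanceAs (DecidableEq ((DAtom n m → Bool) × (Fin n × NF n m k → Bool))))

instance (n m k : ℕ) : Fintype (NF n m k) := (NF.inst n m k).1
instance (n m k : ℕ) : DecidableEq (NF n m k) := (NF.inst n m k).2

/-- Evaluation of an atomic generator in an algebra of type `cyl_n`. -/
def dEval {n m : ℕ} {B : Type*} (d : Fin n → Fin n → B) (v : Fin m → B) :
    DAtom n m → B
  | .inl (i, j) => d i j
  | .inr i => v i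

/-- Evaluation of a normal form of degree `k` in a Boolean algebra with operators
`c i` and constants `d i j`, under the evaluation `v` of the variables. -/
def nfEval {n m : ℕ} {B : Type*} [BooleanAlgebra B] (c : Fin n → B → B)
    (d : Fin n → Fin n → B) (v : Fin m → B) : ∀ k, NF n m k → B
  | 0, β =>
      Finset.univ.inf fun a : DAtom n m =>
        if β a then dEval d v a else (dEval d v a)ᶜ
  | k + 1, σ =>
      let σ' : (DAtom n m → Bool) × (Fin n × NF n m k → Bool) := σ
      (Finset.univ.inf fun a : DAtom n m =>
        if σ'.1 a then dEval d v a else (dEval d v a)ᶜ) ⊓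
      Finset.univ.inf fun p : Fin n × NF n m k =>
        if σ'.2 p then c p.1 (nfEval c d v k p.2)
        else (c p.1 (nfEval c d v k p.2))ᶜ

/-- Terms of type `cyl_n` over `m` variables. -/
inductive Term (n m : ℕ) : Type
  | var : Fin m → Term n m
  | bot : Term n m
  | top : Term n m
  | dg : Fin n → Fin n → Term n m
  | compl : Term n m → Term n m
  | inf : Term n m → Term n m → Term n m
  | sup : Term n m → Term n m → Term n m
  | cyl : Fin n → Term n m → Term n m

/-- Evaluation of a term of type `cyl_n` in a Boolean algebra with operators. -/
def Term.eval {n m : ℕ} {B : Type*} [BooleanAlgebra B] (c : Fin n → B → B)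
    (d : Fin n → Fin n → B) (v : Fin m → B) : Term n m → B
  | .var i => v i
  | .bot => ⊥
  | .top => ⊤
  | .dg i j => d i j
  | .compl t => (t.eval c d v)ᶜ
  | .inf t s => t.eval c d v ⊓ s.eval c d v
  | .sup t s => t.eval c d v ⊔ s.eval c d v
  | .cyl i t => c i (t.eval c d v)

/-!
At each degree the normal forms evaluate to a finite partition of unity, being complete
conjunctions of literals. Hence `S ↦ S.sup nfEval` commutes with complement, meet and join on
sets of normal forms of the same degree. A form of degree `k + 1` lies below a unique form of
degree `k`, its restriction, and by additivity of the `c i` every form of degree `k` is the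
join of the forms of degree `k + 1` restricting to it, so sets of normal forms can be lifted to
any higher degree. Finally `c i` applied to a join of forms `σ` of degree `k` is the join of the
forms of degree `k + 1` in which some literal `c i σ` occurs positively.
-/

open Finset Function

-- Unlike in `Finpartition`, parts may be `⊥`: inconsistent normal forms evaluate to `⊥`.
structure IsBooleanPartition {ι B : Type*} [Fintype ι] [BooleanAlgebra B] (e : ι → B) :
    Prop where
  pairwise_disjoint : Pairwise (Disjoint on e)
  sup_eq_top : univ.sup e = ⊤

namespace IsBooleanPartition

variable {ι ι' B : Type*} [Fintype ι] [Fintype ι'] [BooleanAlgebra B] {e : ι → B} {e' : ι' → B}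

theorem sup_eq_of_le_of_le_compl (he : IsBooleanPartition e) {S : Finset ι} {y : B}
    (hmem : ∀ i ∈ S, e i ≤ y) (hnotMem : ∀ i ∉ S, e i ≤ yᶜ) : S.sup e = y := by
  refine le_antisymm (Finset.sup_le hmem) ?_
  calc y = univ.sup fun i => y ⊓ e i := by
        rw [← sup_inf_distrib_left, he.sup_eq_top, inf_top_eq]
    _ ≤ S.sup e := Finset.sup_le fun i _ => by
        by_cases hi : i ∈ S
        · exact inf_le_right.trans (le_sup hi)
        · exact (inf_le_inf_left y (hnotMem i hi)).trans (inf_compl_self y).le |>.trans bot_le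

theorem disjoint_sup_of_notMem (he : IsBooleanPartition e) {S : Finset ι} {i : ι}
    (hi : i ∉ S) : Disjoint (e i) (S.sup e) :=
  Finset.disjoint_sup_right.2 fun _ hj => he.pairwise_disjoint fun h => hi (h ▸ hj)

theorem sup_compl [DecidableEq ι] (he : IsBooleanPartition e) (S : Finset ι) :
    Sᶜ.sup e = (S.sup e)ᶜ :=
  he.sup_eq_of_le_of_le_compl
    (fun _ hi => le_compl_iff_disjoint_right.2 (he.disjoint_sup_of_notMem (mem_compl.1 hi)))
    (fun _ hi => by rw [compl_compl]; exact le_sup (by simpa using hi))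

theorem sup_inter [DecidableEq ι] (he : IsBooleanPartition e) (S T : Finset ι) :
    (S ∩ T).sup e = S.sup e ⊓ T.sup e := by
  refine he.sup_eq_of_le_of_le_compl
    (fun _ hi => le_inf (le_sup (mem_inter.1 hi).1) (le_sup (mem_inter.1 hi).2)) fun i hi => ?_
  rw [compl_inf]
  rcases not_and_or.1 (mt mem_inter.2 hi) with h | h
  · exact le_sup_of_le_left (le_compl_iff_disjoint_right.2 (he.disjoint_sup_of_notMem h))
  · exact le_sup_of_le_right (le_compl_iff_disjoint_right.2 (he.disjoint_sup_of_notMem h))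

theorem sup_fiber [DecidableEq ι] (he : IsBooleanPartition e) (he' : IsBooleanPartition e')
    {r : ι' → ι} (hr : ∀ j, e' j ≤ e (r j)) (i : ι) :
    (univ.filter fun j => r j = i).sup e' = e i :=
  he'.sup_eq_of_le_of_le_compl (fun j hj => (mem_filter.1 hj).2 ▸ hr j) fun j hj =>
    (hr j).trans <| le_compl_iff_disjoint_right.2 <|
      he.pairwise_disjoint fun h => hj (mem_filter.2 ⟨mem_univ j, h⟩)

theorem prod (he : IsBooleanPartition e) (he' : IsBooleanPartition e') :
    IsBooleanPartition fun p : ι × ι' => e p.1 ⊓ e' p.2 where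
  pairwise_disjoint p q hpq := by
    rcases not_and_or.1 (mt Prod.ext_iff.2 hpq) with h | h
    · exact (he.pairwise_disjoint h).mono inf_le_left inf_le_left
    · exact (he'.pairwise_disjoint h).mono inf_le_right inf_le_right
  sup_eq_top := by
    rw [← univ_product_univ, ← sup_inf_sup, he.sup_eq_top, he'.sup_eq_top, inf_top_eq]

end IsBooleanPartition

section CompleteConjunction

variable {I B : Type*} [Fintype I] [BooleanAlgebra B]

def bconj (x : I → B) (β : I → Bool) : B :=
  univ.inf fun a => if β a then x a else (x a)ᶜ

theorem bconj_le_of_true {x : I → B} {β : I → Bool} {a : I} (h : β a = true) :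
    bconj x β ≤ x a := by
  simpa [bconj, h] using Finset.inf_le (f := fun a => if β a then x a else (x a)ᶜ) (mem_univ a)

theorem bconj_le_compl_of_false {x : I → B} {β : I → Bool} {a : I} (h : β a = false) :
    bconj x β ≤ (x a)ᶜ := by
  simpa [bconj, h] using Finset.inf_le (f := fun a => if β a then x a else (x a)ᶜ) (mem_univ a)

theorem bconj_le_compl_sup {J : Type*} {x : I → B} {β : I → Bool} {s : Finset J} {g : J → I}
    (h : ∀ j ∈ s, β (g j) = false) : bconj x β ≤ (s.sup fun j => x (g j))ᶜ :=
  le_compl_iff_disjoint_right.2 <| Finset.disjoint_sup_right.2 fun j hj =>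
    le_compl_iff_disjoint_right.1 (bconj_le_compl_of_false (h j hj))

theorem le_bconj {x : I → B} {β : I → Bool} {y : B} (hpos : ∀ a, β a = true → y ≤ x a)
    (hneg : ∀ a, β a = false → y ≤ (x a)ᶜ) : y ≤ bconj x β :=
  Finset.le_inf fun a _ => by cases h : β a <;> simp [hpos, hneg, h]

theorem isBooleanPartition_bconj [DecidableEq I] (x : I → B) : IsBooleanPartition (bconj x) where
  pairwise_disjoint β β' hne := by
    obtain ⟨a, ha⟩ := Function.ne_iff.1 hne
    cases hβ : β a <;> cases hβ' : β' a <;> simp only [hβ, hβ', ne_eq, not_true_eq_false] at ha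
    · exact disjoint_compl_left.mono (bconj_le_compl_of_false hβ) (bconj_le_of_true hβ')
    · exact disjoint_compl_right.mono (bconj_le_of_true hβ) (bconj_le_compl_of_false hβ')
  sup_eq_top := by
    refine top_le_iff.1 ?_
    calc (⊤ : B) = univ.inf fun a => (univ : Finset Bool).sup fun b => if b then x a else (x a)ᶜ :=
          by simp
      _ = _ := inf_sup _ _ fun a (b : Bool) => if b then x a else (x a)ᶜ
      _ ≤ univ.sup (bconj x) := Finset.sup_le fun g _ =>
          (inf_attach univ fun a => if g a (mem_univ a) then x a else (x a)ᶜ).le.trans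
            (le_sup (f := bconj x) (mem_univ _))

theorem sup_filter_bconj [DecidableEq I] (x : I → B) (a : I) :
    (univ.filter fun β : I → Bool => β a = true).sup (bconj x) = x a :=
  (isBooleanPartition_bconj x).sup_eq_of_le_of_le_compl
    (fun _ hβ => bconj_le_of_true (mem_filter.1 hβ).2)
    (fun _ hβ => bconj_le_compl_of_false (by simpa using hβ))

end CompleteConjunction

section AdditiveMap

variable {α β : Type*} [SemilatticeSup α] [SemilatticeSup β] {f : α → β}

theorem monotone_of_map_sup (hf : ∀ x y, f (x ⊔ y) = f x ⊔ f y) : Monotone f :=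
  fun x y h => by
    rw [← sup_eq_right.2 h, hf]
    exact le_sup_left

theorem map_finset_sup_of_map_sup [OrderBot α] [OrderBot β] (hf₀ : f ⊥ = ⊥)
    (hf : ∀ x y, f (x ⊔ y) = f x ⊔ f y) {ι : Type*} (s : Finset ι) (g : ι → α) :
    f (s.sup g) = s.sup (f ∘ g) :=
  map_finset_sup (SupBotHom.mk ⟨f, hf⟩ hf₀) s g

end AdditiveMap

def NF.restrict {n m : ℕ} : ∀ k, NF n m (k + 1) → NF n m k
  | 0, τ => τ.1
  | k + 1, τ =>
      let τ' : (DAtom n m → Bool) × (Fin n × NF n m (k + 1) → Bool) := τ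
      (τ'.1, fun p => decide (∃ ρ, NF.restrict k ρ = p.2 ∧ τ'.2 (p.1, ρ) = true))

def NF.fiber {n m : ℕ} (k : ℕ) (σ : NF n m k) : Finset (NF n m (k + 1)) :=
  univ.filter fun τ => NF.restrict k τ = σ

def NF.lift {n m k : ℕ} : ∀ j, Finset (NF n m k) → Finset (NF n m (k + j))
  | 0, S => S
  | j + 1, S => (NF.lift j S).biUnion (NF.fiber (k + j))

def NF.cast {n m k k' : ℕ} (h : k = k') (S : Finset (NF n m k)) : Finset (NF n m k') := h ▸ S

def NF.cylSet {n m k : ℕ} (i : Fin n) (S : Finset (NF n m k)) : Finset (NF n m (k + 1)) :=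
  univ.filter fun τ => ∃ σ ∈ S, τ.2 (i, σ) = true

section Evaluation

variable {n m : ℕ} {B : Type*} [BooleanAlgebra B]
  (c : Fin n → B → B) (d : Fin n → Fin n → B) (v : Fin m → B)

theorem nfEval_succ (k : ℕ) (σ : NF n m (k + 1)) :
    nfEval c d v (k + 1) σ =
      bconj (dEval d v) σ.1 ⊓ bconj (fun p : Fin n × NF n m k => c p.1 (nfEval c d v k p.2)) σ.2 :=
  rfl

theorem isBooleanPartition_nfEval : ∀ k, IsBooleanPartition (nfEval c d v k : NF n m k → B)
  | 0 => isBooleanPartition_bconj (dEval d v)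
  | _ + 1 => (isBooleanPartition_bconj _).prod (isBooleanPartition_bconj _)

theorem sup_nfEval_cast {k k' : ℕ} (h : k = k') (S : Finset (NF n m k)) :
    (NF.cast h S).sup (nfEval c d v k') = S.sup (nfEval c d v k) := by
  subst h
  rfl

variable {c} (hc₀ : ∀ i, c i ⊥ = ⊥) (hc : ∀ i x y, c i (x ⊔ y) = c i x ⊔ c i y)
include hc₀ hc

theorem nfEval_le_nfEval_restrict :
    ∀ k (τ : NF n m (k + 1)), nfEval c d v (k + 1) τ ≤ nfEval c d v k (NF.restrict k τ)
  | 0, _ => inf_le_left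
  | k + 1, τ => by
    have IH := nfEval_le_nfEval_restrict k
    have hfiber (ρ : NF n m k) : (NF.fiber k ρ).sup (nfEval c d v (k + 1)) = nfEval c d v k ρ :=
      (isBooleanPartition_nfEval c d v k).sup_fiber (isBooleanPartition_nfEval c d v (k + 1)) IH ρ
    rw [nfEval_succ, nfEval_succ]
    refine inf_le_inf_left _ (le_bconj (fun p hp => ?_) fun p hp => ?_)
    · obtain ⟨ρ, hρ, hτρ⟩ := of_decide_eq_true hp
      calc _ ≤ c p.1 (nfEval c d v (k + 1) ρ) := bconj_le_of_true (a := (p.1, ρ)) hτρ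
        _ ≤ c p.1 (nfEval c d v k p.2) := monotone_of_map_sup (hc p.1) (hρ ▸ IH ρ)
    · have hnone : ∀ ρ ∈ NF.fiber k p.2, τ.2 (p.1, ρ) = false := by
        simpa [NF.fiber] using of_decide_eq_false hp
      calc _ ≤ ((NF.fiber k p.2).sup fun ρ => c p.1 (nfEval c d v (k + 1) ρ))ᶜ :=
            bconj_le_compl_sup
              (x := fun q : Fin n × NF n m (k + 1) => c q.1 (nfEval c d v (k + 1) q.2)) hnone
        _ = (c p.1 (nfEval c d v k p.2))ᶜ := by
          rw [← hfiber, map_finset_sup_of_map_sup (hc₀ _) (hc _)]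
          rfl

theorem sup_nfEval_fiber (k : ℕ) (σ : NF n m k) :
    (NF.fiber k σ).sup (nfEval c d v (k + 1)) = nfEval c d v k σ :=
  (isBooleanPartition_nfEval c d v k).sup_fiber (isBooleanPartition_nfEval c d v (k + 1))
    (nfEval_le_nfEval_restrict d v hc₀ hc k) σ

theorem sup_nfEval_lift {k : ℕ} :
    ∀ j (S : Finset (NF n m k)), (NF.lift j S).sup (nfEval c d v (k + j)) = S.sup (nfEval c d v k)
  | 0, _ => rfl
  | j + 1, S => by
    rw [NF.lift, sup_biUnion, ← sup_nfEval_lift j S]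
    exact sup_congr rfl fun σ _ => sup_nfEval_fiber d v hc₀ hc (k + j) σ

theorem sup_nfEval_cylSet {k : ℕ} (i : Fin n) (S : Finset (NF n m k)) :
    (NF.cylSet i S).sup (nfEval c d v (k + 1)) = c i (S.sup (nfEval c d v k)) := by
  rw [map_finset_sup_of_map_sup (hc₀ i) (hc i)]
  refine (isBooleanPartition_nfEval c d v (k + 1)).sup_eq_of_le_of_le_compl
    (fun τ hτ => ?_) fun τ hτ => ?_
  · obtain ⟨σ, hσ, hτσ⟩ := (mem_filter.1 hτ).2
    exact inf_le_right.trans ((bconj_le_of_true hτσ).trans (le_sup (f := c i ∘ nfEval c d v k) hσ))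
  · have hnone : ∀ σ ∈ S, τ.2 (i, σ) = false := by simpa [NF.cylSet] using hτ
    exact inf_le_right.trans (bconj_le_compl_sup (g := fun σ => (i, σ)) hnone)

end Evaluation

def Term.nf {n m : ℕ} : Term n m → (q : ℕ) × Finset (NF n m q)
  | .var i => ⟨0, univ.filter fun β : NF n m 0 => β (.inr i) = true⟩
  | .bot => ⟨0, ∅⟩
  | .top => ⟨0, univ⟩
  | .dg i j => ⟨0, univ.filter fun β : NF n m 0 => β (.inl (i, j)) = true⟩
  | .compl t => ⟨t.nf.1, t.nf.2ᶜ⟩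
  | .inf t s => ⟨t.nf.1 + s.nf.1,
      NF.lift s.nf.1 t.nf.2 ∩ NF.cast (Nat.add_comm _ _) (NF.lift t.nf.1 s.nf.2)⟩
  | .sup t s => ⟨t.nf.1 + s.nf.1,
      NF.lift s.nf.1 t.nf.2 ∪ NF.cast (Nat.add_comm _ _) (NF.lift t.nf.1 s.nf.2)⟩
  | .cyl i t => ⟨t.nf.1 + 1, NF.cylSet i t.nf.2⟩

theorem Term.eval_eq_sup_nf {n m : ℕ} {B : Type*} [BooleanAlgebra B] {c : Fin n → B → B}
    (d : Fin n → Fin n → B) (v : Fin m → B) (hc₀ : ∀ i, c i ⊥ = ⊥)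
    (hc : ∀ i x y, c i (x ⊔ y) = c i x ⊔ c i y) :
    ∀ τ : Term n m, τ.eval c d v = τ.nf.2.sup (nfEval c d v τ.nf.1)
  | .var i => (sup_filter_bconj (dEval d v) (.inr i)).symm
  | .bot => rfl
  | .top => (isBooleanPartition_nfEval c d v 0).sup_eq_top.symm
  | .dg i j => (sup_filter_bconj (dEval d v) (.inl (i, j))).symm
  | .compl t => by
    rw [Term.eval, eval_eq_sup_nf d v hc₀ hc t]
    exact ((isBooleanPartition_nfEval c d v _).sup_compl _).symm
  | .inf t s => by
    rw [Term.nf, Term.eval, (isBooleanPartition_nfEval c d v _).sup_inter, sup_nfEval_cast,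
      sup_nfEval_lift d v hc₀ hc, sup_nfEval_lift d v hc₀ hc, eval_eq_sup_nf d v hc₀ hc t,
      eval_eq_sup_nf d v hc₀ hc s]
  | .sup t s => by
    rw [Term.nf, Term.eval, sup_union, sup_nfEval_cast, sup_nfEval_lift d v hc₀ hc,
      sup_nfEval_lift d v hc₀ hc, eval_eq_sup_nf d v hc₀ hc t, eval_eq_sup_nf d v hc₀ hc s]
  | .cyl i t => by
    rw [Term.nf, Term.eval, sup_nfEval_cylSet d v hc₀ hc, eval_eq_sup_nf d v hc₀ hc t]

/-- There is an (effectively computable) assignment `f` taking each term `τ` of type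
`cyl_n` over `m` variables to a degree `q` and a finite set `S_τ ⊆ F^{n,m}_q` of normal
forms of degree `q` such that `τ = Σ S_τ` is valid in every Boolean algebra with
(normal, additive) operators of type `cyl_n`. -/
theorem stmt_11 (n m : ℕ) :
    ∃ f : Term n m → (q : ℕ) × Finset (NF n m q),
      ∀ (τ : Term n m) (B : Type*) [BooleanAlgebra B]
        (c : Fin n → B → B) (d : Fin n → Fin n → B) (v : Fin m → B),
        (∀ i : Fin n, c i ⊥ = ⊥) →
        (∀ (i : Fin n) (x y : B), c i (x ⊔ y) = c i x ⊔ c i y) →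
        τ.eval c d v = (f τ).2.sup (nfEval c d v (f τ).1) :=
  ⟨Term.nf, fun τ _ _ _ d v hc₀ hc => Term.eval_eq_sup_nf d v hc₀ hc τ⟩
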